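/- For every integer s ≥ 1, the antisymmetric bilinear map β : ℝ^{s+1} × ℝ^{s+1} → ℝ^s defined by β(u, v)_k = u₁ v_{k+1} − u_{k+1} v₁ for k = 1, …, s is surjective on isotropic loops. -/

import Mathlib

open MeasureTheory Topology ENNReal Filter

/-- `ℝ^n` with the Euclidean norm. -/
abbrev Euc (n : ℕ) : Type := EuclideanSpace ℝ (Fin n)

/-- `ℝ^{mn} = (ℝ^m)^n` with the Euclidean norm; a point `u` has components
`u_j = (u (j, ·)) ∈ ℝ^m`, `j = 1, …, n`. -/
abbrev EucN (m n : ℕ) : Type := EuclideanSpace ℝ (Fin n × Fin m)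

/-- The norm of the wedge of two vectors:
`|u ∧ v| = (|u|²|v|² − ⟨u,v⟩²)^{1/2}`. -/
noncomputable def wedgeNorm {V : Type*} [NormedAddCommGroup V] [InnerProductSpace ℝ V]
    (u v : V) : ℝ :=
  Real.sqrt (‖u‖ ^ 2 * ‖v‖ ^ 2 - (inner ℝ u v : ℝ) ^ 2)

/-- The `ℝ^s`-valued multi-symplectic form on `ℝ^{mn}` associated with an antisymmetric
bilinear map `β : ℝ^m × ℝ^m → ℝ^s`: `ω(u,v) = Σ_{j} β(u_j, v_j)`. -/
noncomputable def msymp {m s : ℕ} (β : Euc m →L[ℝ] Euc m →L[ℝ] Euc s) (n : ℕ)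
    (u v : EucN m n) : Euc s :=
  ∑ j : Fin n, β (WithLp.toLp 2 (fun i => u (j, i))) (WithLp.toLp 2 (fun i => v (j, i)))

/-- The point `e^{2πit} = (cos 2πt, sin 2πt)` of the unit circle `S¹ ⊂ ℝ²`. -/
noncomputable def circlePt (t : ℝ) : Euc 2 :=
  (WithLp.equiv 2 (Fin 2 → ℝ)).symm ![Real.cos (2 * Real.pi * t), Real.sin (2 * Real.pi * t)]

/-- `β : ℝ^m × ℝ^m → ℝ^s` (antisymmetric bilinear) is surjective on isotropic loops with
constant `C > 0`: for every `λ > 0` and every `σ ∈ L^∞((0,1), ℝ^s)` with `∫₀¹ σ = 0`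
there are a Lipschitz loop `a : [0,1] → ℝ^m` with `β(a, a') = σ` a.e., `|a(0)| ≤ Cλ`,
`|a'| ≤ (C/λ)|σ|` a.e., and a Lipschitz isotropic homotopy `G : [0,1]² → ℝ^m` carrying
`a` to a point, with `Lip(G) ≤ C(λ + ‖σ‖_∞/λ)` and swept area
`∬ |∂_τG ∧ ∂_tG| ≤ C (∫₀¹|a'|)²`. -/
noncomputable def SurjOnIsotropicLoops {m s : ℕ}
    (β : Euc m →L[ℝ] Euc m →L[ℝ] Euc s) (C : ℝ) : Prop :=
  0 < C ∧
  ∀ lam : ℝ, 0 < lam →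
  ∀ σ : ℝ → Euc s,
    MemLp σ ⊤ (volume.restrict (Set.Ioo (0 : ℝ) 1)) →
    (∫ t in (0 : ℝ)..1, σ t) = 0 →
  ∃ (A : ℝ → Euc m) (G : ℝ × ℝ → Euc m) (Ka KG : NNReal),
    LipschitzOnWith Ka A (Set.Icc (0 : ℝ) 1) ∧
    A 0 = A 1 ∧
    ‖A 0‖ ≤ C * lam ∧
    (∀ᵐ t ∂ volume.restrict (Set.Ioo (0 : ℝ) 1),
      DifferentiableAt ℝ A t ∧ β (A t) (deriv A t) = σ t ∧
      ‖deriv A t‖ ≤ (C / lam) * ‖σ t‖) ∧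
    LipschitzOnWith KG G (Set.Icc (0 : ℝ) 1 ×ˢ Set.Icc (0 : ℝ) 1) ∧
    (KG : ℝ) ≤ C * (lam + (eLpNorm σ ⊤ (volume.restrict (Set.Ioo (0 : ℝ) 1))).toReal / lam) ∧
    (∀ τ ∈ Set.Icc (0 : ℝ) 1, G (τ, 0) = A τ) ∧
    (∀ τ ∈ Set.Icc (0 : ℝ) 1, ∀ τ' ∈ Set.Icc (0 : ℝ) 1, G (τ, 1) = G (τ', 1)) ∧
    (∀ t ∈ Set.Icc (0 : ℝ) 1, G (0, t) = G (1, t)) ∧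
    (∀ᵐ p ∂ (volume : Measure (ℝ × ℝ)).restrict (Set.Ioo (0 : ℝ) 1 ×ˢ Set.Ioo (0 : ℝ) 1),
      DifferentiableAt ℝ G p ∧
      β (fderiv ℝ G p (1, 0)) (fderiv ℝ G p (0, 1)) = 0) ∧
    (∫ p in Set.Ioo (0 : ℝ) 1 ×ˢ Set.Ioo (0 : ℝ) 1,
        wedgeNorm (fderiv ℝ G p (1, 0)) (fderiv ℝ G p (0, 1)))
      ≤ C * (∫ t in (0 : ℝ)..1, ‖deriv A t‖) ^ 2

/-! The loop is `a(t) = λ e₁ + (0, λ⁻¹ ∫₀ᵗ σ)`. Since `a'` has vanishing first coordinate,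
`β(a, a')_k = a₁ a'_{k+1} = λ · λ⁻¹ σ_k`. It is contracted to `λ e₁` by the straight-line
homotopy `Γ(τ, t) = λ e₁ + (1 - t)(a(τ) - λ e₁)`, both of whose partial derivatives lie in
`{0} × ℝ^s`, where `β` vanishes. The Lipschitz and area bounds come from `t ↦ ∫₀ᵗ σ` being
`‖σ‖_∞`-Lipschitz and bounded by `∫₀¹ |σ|`, and `C = 2` suffices. -/

open Set
open scoped NNReal

theorem MeasureTheory.MemLp.ae_norm_le_eLpNorm_top {α E : Type*} [MeasurableSpace α]
    [NormedAddCommGroup E] {μ : Measure α} {f : α → E} (hf : MemLp f ⊤ μ) :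
    ∀ᵐ x ∂μ, ‖f x‖ ≤ (eLpNorm f ⊤ μ).toReal := by
  filter_upwards [enorm_ae_le_eLpNormEssSup f μ] with x hx
  rw [← eLpNorm_exponent_top, ← ofReal_norm] at hx
  exact (ENNReal.ofReal_le_iff_le_toReal hf.2.ne).1 hx

section Primitive

variable {E : Type*} [NormedAddCommGroup E] [NormedSpace ℝ E] {f : ℝ → E} {a b : ℝ}

theorem norm_primitive_le {x : ℝ} (hf : IntervalIntegrable f volume a b) (hx : x ∈ Icc a b) :
    ‖∫ t in a..x, f t‖ ≤ ∫ t in a..b, ‖f t‖ :=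
  (intervalIntegral.norm_integral_le_integral_norm hx.1).trans <|
    intervalIntegral.integral_mono_interval le_rfl hx.1 hx.2
      (Eventually.of_forall fun _ => norm_nonneg _) hf.norm

theorem lipschitzOnWith_primitive {M : ℝ≥0} (hf : IntervalIntegrable f volume a b)
    (hM : ∀ᵐ t ∂volume.restrict (Ioc a b), ‖f t‖ ≤ M) :
    LipschitzOnWith M (fun x => ∫ t in a..x, f t) (Icc a b) := by
  refine LipschitzOnWith.of_dist_le_mul fun x hx y hy => ?_
  have hsub : ∀ z ∈ Icc a b, IntervalIntegrable f volume a z := fun z hz =>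
    hf.mono_set (uIcc_subset_uIcc_left (Icc_subset_uIcc hz))
  rw [dist_eq_norm, intervalIntegral.integral_interval_sub_left (hsub x hx) (hsub y hy),
    Real.dist_eq]
  refine intervalIntegral.norm_integral_le_of_norm_le_const_ae ?_
  filter_upwards [(ae_restrict_iff' measurableSet_Ioc).1 hM] with t ht htyx
  rw [← uIoc_of_le (hx.1.trans hx.2)] at ht
  exact ht (uIoc_subset_uIoc_of_uIcc_subset_uIcc
    (uIcc_subset_uIcc (Icc_subset_uIcc hy) (Icc_subset_uIcc hx)) htyx)

end Primitive

theorem wedgeNorm_le {V : Type*} [NormedAddCommGroup V] [InnerProductSpace ℝ V] (u v : V) :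
    wedgeNorm u v ≤ ‖u‖ * ‖v‖ := by
  rw [wedgeNorm, ← Real.sqrt_sq (by positivity : 0 ≤ ‖u‖ * ‖v‖), mul_pow]
  exact Real.sqrt_le_sqrt (sub_le_self _ (sq_nonneg _))

theorem ae_restrict_prod_fst {α β : Type*} [MeasurableSpace α] [MeasurableSpace β]
    {μ : Measure α} {ν : Measure β} [SFinite μ] [SFinite ν] {s : Set α} {t : Set β}
    {P : α → Prop}
    (h : ∀ᵐ x ∂μ.restrict s, P x) : ∀ᵐ p ∂(μ.prod ν).restrict (s ×ˢ t), P p.1 := by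
  rw [← Measure.prod_restrict]
  exact Measure.quasiMeasurePreserving_fst.ae h

section Cone

variable {V : Type*} [NormedAddCommGroup V] [NormedSpace ℝ V]

def cone (c : V) (γ : ℝ → V) (p : ℝ × ℝ) : V := c + (1 - p.2) • γ p.1

theorem cone_apply_zero (c : V) (γ : ℝ → V) (τ : ℝ) : cone c γ (τ, 0) = c + γ τ := by
  simp [cone]

theorem cone_apply_one (c : V) (γ : ℝ → V) (τ : ℝ) : cone c γ (τ, 1) = c := by
  simp [cone]

theorem lipschitzOnWith_cone {c : V} {γ : ℝ → V} {K : ℝ≥0}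
    (hγ : LipschitzOnWith K γ (Icc 0 1)) (hγ0 : γ 0 = 0) :
    LipschitzOnWith (2 * K) (cone c γ) (Icc 0 1 ×ˢ Icc 0 1) := by
  refine LipschitzOnWith.of_dist_le_mul fun p ⟨hp1, hp2⟩ q ⟨hq1, _⟩ => ?_
  have hbound : ‖γ q.1‖ ≤ K :=
    calc ‖γ q.1‖ = dist (γ q.1) (γ 0) := by rw [hγ0, dist_zero_right]
      _ ≤ K * dist q.1 0 := hγ.dist_le_mul _ hq1 _ ⟨le_rfl, zero_le_one⟩
      _ ≤ K * 1 := by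
        gcongr; rw [Real.dist_eq, sub_zero, abs_of_nonneg hq1.1]; exact hq1.2
      _ = K := mul_one _
  have hsplit : cone c γ p - cone c γ q
      = (1 - p.2) • (γ p.1 - γ q.1) + (q.2 - p.2) • γ q.1 := by
    simp only [cone, smul_sub, sub_smul]; abel
  have h1p : |1 - p.2| ≤ 1 := abs_le.2 ⟨by linarith [hp2.2], by linarith [hp2.1]⟩
  rw [dist_eq_norm]
  calc ‖cone c γ p - cone c γ q‖
      ≤ |1 - p.2| * ‖γ p.1 - γ q.1‖ + |q.2 - p.2| * ‖γ q.1‖ := by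
        rw [hsplit]; exact (norm_add_le _ _).trans (by simp [norm_smul])
    _ ≤ 1 * (K * dist p q) + dist p q * K := by
        gcongr
        · rw [← dist_eq_norm]
          exact (hγ.dist_le_mul _ hp1 _ hq1).trans
            (mul_le_mul_of_nonneg_left ((le_max_left _ _).trans_eq Prod.dist_eq.symm) K.2)
        · rw [abs_sub_comm, ← Real.dist_eq]
          exact (le_max_right _ _).trans_eq Prod.dist_eq.symm
    _ = 2 * K * dist p q := by ring

theorem hasFDerivAt_cone {c : V} {γ : ℝ → V} {v : V} {p : ℝ × ℝ} (hγ : HasDerivAt γ v p.1) :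
    HasFDerivAt (cone c γ)
      ((1 - p.2) • (ContinuousLinearMap.fst ℝ ℝ ℝ).smulRight v
        - (ContinuousLinearMap.snd ℝ ℝ ℝ).smulRight (γ p.1)) p := by
  have h : HasFDerivAt (cone c γ) _ p :=
    (((hasFDerivAt_const (1 : ℝ) p).sub hasFDerivAt_snd).smul
      (hγ.hasFDerivAt.comp p hasFDerivAt_fst)).const_add c
  refine h.congr_fderiv ?_
  ext <;> simp

theorem fderiv_cone_apply {c : V} {γ : ℝ → V} {v : V} {p : ℝ × ℝ} (hγ : HasDerivAt γ v p.1) :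
    fderiv ℝ (cone c γ) p (1, 0) = (1 - p.2) • v ∧ fderiv ℝ (cone c γ) p (0, 1) = -γ p.1 := by
  simp [(hasFDerivAt_cone hγ).fderiv]

theorem ae_cone_isotropic {W : Type*} [NormedAddCommGroup W] [NormedSpace ℝ W]
    (β : V →L[ℝ] V →L[ℝ] W) {c : V} {γ γ' : ℝ → V} {s t : Set ℝ}
    (hγ : ∀ᵐ τ ∂volume.restrict s, HasDerivAt γ (γ' τ) τ) (hiso : ∀ τ, β (γ' τ) (γ τ) = 0) :
    ∀ᵐ p ∂(volume : Measure (ℝ × ℝ)).restrict (s ×ˢ t), DifferentiableAt ℝ (cone c γ) p ∧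
      β (fderiv ℝ (cone c γ) p (1, 0)) (fderiv ℝ (cone c γ) p (0, 1)) = 0 := by
  rw [Measure.volume_eq_prod]
  filter_upwards [ae_restrict_prod_fst hγ] with p hp
  obtain ⟨h10, h01⟩ := fderiv_cone_apply (c := c) hp
  refine ⟨(hasFDerivAt_cone hp).differentiableAt, ?_⟩
  simp [h10, h01, hiso]

end Cone

theorem setIntegral_wedgeNorm_cone_le {V : Type*} [NormedAddCommGroup V]
    [InnerProductSpace ℝ V] {c : V} {γ γ' : ℝ → V} {R : ℝ}
    (hγ : ∀ᵐ τ ∂volume.restrict (Ioo 0 1), HasDerivAt γ (γ' τ) τ)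
    (hγ' : IntegrableOn γ' (Ioo 0 1)) (hR : ∀ τ ∈ Ioo (0 : ℝ) 1, ‖γ τ‖ ≤ R) :
    ∫ p in Ioo (0 : ℝ) 1 ×ˢ Ioo (0 : ℝ) 1,
        wedgeNorm (fderiv ℝ (cone c γ) p (1, 0)) (fderiv ℝ (cone c γ) p (0, 1))
      ≤ (∫ τ in Ioo 0 1, ‖γ' τ‖) * R := by
  have hbound : ∀ᵐ p ∂(volume : Measure (ℝ × ℝ)).restrict (Ioo 0 1 ×ˢ Ioo 0 1),
      wedgeNorm (fderiv ℝ (cone c γ) p (1, 0)) (fderiv ℝ (cone c γ) p (0, 1))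
        ≤ ‖γ' p.1‖ * R := by
    filter_upwards [Measure.volume_eq_prod ℝ ℝ ▸ ae_restrict_prod_fst (t := Ioo 0 1) hγ,
      ae_restrict_mem (measurableSet_Ioo.prod measurableSet_Ioo)] with p hp ⟨hp1, hp2⟩
    have h1p : |1 - p.2| ≤ 1 := abs_le.2 ⟨by linarith [hp2.2], by linarith [hp2.1]⟩
    refine (wedgeNorm_le _ _).trans ?_
    obtain ⟨h10, h01⟩ := fderiv_cone_apply (c := c) hp
    rw [h10, h01, norm_smul, norm_neg, Real.norm_eq_abs]
    gcongr
    · exact mul_le_of_le_one_left (norm_nonneg _) h1p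
    · exact hR _ hp1
  have hint : Integrable (fun p : ℝ × ℝ => ‖γ' p.1‖ * R)
      ((volume : Measure (ℝ × ℝ)).restrict (Ioo 0 1 ×ˢ Ioo 0 1)) := by
    rw [Measure.volume_eq_prod, ← Measure.prod_restrict]
    exact hγ'.norm.mul_prod (integrable_const R)
  refine (integral_mono_of_nonneg (.of_forall fun _ => Real.sqrt_nonneg _) hint hbound).trans
    (le_of_eq ?_)
  rw [Measure.volume_eq_prod, setIntegral_prod_mul (fun τ => ‖γ' τ‖) (fun _ => R)]
  simp

section KBracket

variable {s : ℕ}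

/-- `x ↦ (0, x)`, onto the span of `X₂, …, X_{s+1}`. -/
noncomputable def consZero (s : ℕ) : Euc s →ₗᵢ[ℝ] Euc (s + 1) where
  toFun x := WithLp.toLp 2 (Fin.cons 0 x.ofLp)
  map_add' x y := by ext i; cases i using Fin.cases <;> simp
  map_smul' c x := by ext i; cases i using Fin.cases <;> simp
  norm_map' x := by simp [EuclideanSpace.norm_eq, Fin.sum_univ_succ]

@[simp] theorem consZero_apply_zero (x : Euc s) : consZero s x 0 = 0 := rfl

@[simp] theorem consZero_apply_succ (x : Euc s) (k : Fin s) : consZero s x k.succ = x k := rfl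

theorem bracket_single_add_consZero {β : Euc (s + 1) →L[ℝ] Euc (s + 1) →L[ℝ] Euc s}
    (hβ : ∀ u v : Euc (s + 1), ∀ k : Fin s, β u v k = u 0 * v k.succ - u k.succ * v 0)
    (c : ℝ) (x y : Euc s) :
    β (EuclideanSpace.single 0 c + consZero s x) (consZero s y) = c • y := by
  ext k
  simp [hβ]

theorem bracket_consZero_consZero {β : Euc (s + 1) →L[ℝ] Euc (s + 1) →L[ℝ] Euc s}
    (hβ : ∀ u v : Euc (s + 1), ∀ k : Fin s, β u v k = u 0 * v k.succ - u k.succ * v 0)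
    (x y : Euc s) : β (consZero s x) (consZero s y) = 0 := by
  ext k
  simp [hβ]

end KBracket

theorem LipschitzOnWith.const_add {V : Type*} [SeminormedAddCommGroup V] {K : ℝ≥0}
    {γ : ℝ → V} {s : Set ℝ} (h : LipschitzOnWith K γ s) (c : V) :
    LipschitzOnWith K (fun x => c + γ x) s :=
  LipschitzOnWith.of_dist_le_mul fun x hx y hy => by
    simpa only [dist_add_left] using h.dist_le_mul x hx y hy

section KLoop

variable {s : ℕ} {lam : ℝ} {σ : ℝ → Euc s}

/-- The loop of the theorem is `λ e₁ + kLoopOffset λ σ`. -/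
noncomputable def kLoopOffset (lam : ℝ) (σ : ℝ → Euc s) (τ : ℝ) : Euc (s + 1) :=
  consZero s (∫ t in 0..τ, lam⁻¹ • σ t)

theorem kLoopOffset_zero : kLoopOffset lam σ 0 = 0 := by simp [kLoopOffset]

theorem kLoopOffset_one (hσ : ∫ t in (0 : ℝ)..1, σ t = 0) : kLoopOffset lam σ 1 = 0 := by
  simp [kLoopOffset, intervalIntegral.integral_smul, hσ]

theorem intervalIntegrable_inv_smul (hσ : IntegrableOn σ (Ioo 0 1)) :
    IntervalIntegrable (fun t => lam⁻¹ • σ t) volume 0 1 :=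
  (intervalIntegrable_iff_integrableOn_Ioo_of_le zero_le_one).2 (hσ.smul lam⁻¹)

theorem lipschitzOnWith_kLoopOffset (hlam : 0 < lam)
    (hσ : MemLp σ ⊤ (volume.restrict (Ioo 0 1))) :
    LipschitzOnWith ((eLpNorm σ ⊤ (volume.restrict (Ioo 0 1))).toReal / lam).toNNReal
      (kLoopOffset lam σ) (Icc 0 1) := by
  have hbound : ∀ᵐ t ∂volume.restrict (Ioc 0 1), ‖lam⁻¹ • σ t‖
      ≤ ((eLpNorm σ ⊤ (volume.restrict (Ioo 0 1))).toReal / lam).toNNReal := by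
    rw [← Measure.restrict_congr_set Ioo_ae_eq_Ioc]
    filter_upwards [hσ.ae_norm_le_eLpNorm_top] with t ht
    rw [Real.coe_toNNReal _ (by positivity), norm_smul, norm_inv, Real.norm_of_nonneg hlam.le,
      inv_mul_eq_div]
    exact div_le_div_of_nonneg_right ht hlam.le
  have h := (consZero s).lipschitz.comp_lipschitzOnWith
    (lipschitzOnWith_primitive (intervalIntegrable_inv_smul (hσ.integrable le_top)) hbound)
  rwa [one_mul] at h

theorem ae_hasDerivAt_kLoopOffset (hσ : IntegrableOn σ (Ioo 0 1)) :
    ∀ᵐ τ ∂volume.restrict (Ioo 0 1),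
      HasDerivAt (kLoopOffset lam σ) (consZero s (lam⁻¹ • σ τ)) τ := by
  filter_upwards [ae_restrict_of_ae (intervalIntegrable_inv_smul hσ).ae_hasDerivAt_integral,
    ae_restrict_mem measurableSet_Ioo] with τ hτ hτI
  exact (consZero s).toContinuousLinearMap.hasFDerivAt.comp_hasDerivAt τ
    (hτ (by simpa [uIcc_of_le] using Ioo_subset_Icc_self hτI) 0 (by simp))

theorem norm_kLoopOffset_le (hσ : IntegrableOn σ (Ioo 0 1)) {τ : ℝ} (hτ : τ ∈ Icc 0 1) :
    ‖kLoopOffset lam σ τ‖ ≤ ∫ t in Ioo 0 1, ‖consZero s (lam⁻¹ • σ t)‖ := by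
  simp only [kLoopOffset, LinearIsometry.norm_map]
  refine (norm_primitive_le (intervalIntegrable_inv_smul hσ) hτ).trans_eq ?_
  rw [intervalIntegral.integral_of_le zero_le_one, integral_Ioc_eq_integral_Ioo]

end KLoop

theorem stmt11_general (s : ℕ)
    (β : Euc (s + 1) →L[ℝ] Euc (s + 1) →L[ℝ] Euc s)
    (hβ : ∀ u v : Euc (s + 1), ∀ k : Fin s,
      β u v k = u 0 * v k.succ - u k.succ * v 0) :
    ∃ C : ℝ, SurjOnIsotropicLoops β C := by
  refine ⟨2, two_pos, fun lam hlam σ hσ hσ0 => ?_⟩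
  have hσI : IntegrableOn σ (Ioo 0 1) := hσ.integrable le_top
  set γ := kLoopOffset lam σ
  set c : Euc (s + 1) := EuclideanSpace.single 0 lam
  set L := ∫ t in Ioo 0 1, ‖consZero s (lam⁻¹ • σ t)‖
  have hγ := ae_hasDerivAt_kLoopOffset (lam := lam) hσI
  have hA : ∀ᵐ t ∂volume.restrict (Ioo 0 1),
      HasDerivAt (fun t => c + γ t) (consZero s (lam⁻¹ • σ t)) t := by
    filter_upwards [hγ] with t ht using ht.const_add c
  have hlen : ∫ t in (0 : ℝ)..1, ‖deriv (fun t => c + γ t) t‖ = L := by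
    rw [intervalIntegral.integral_of_le zero_le_one, integral_Ioc_eq_integral_Ioo]
    exact integral_congr_ae (by filter_upwards [hA] with t ht; rw [ht.deriv])
  have hγlip := lipschitzOnWith_kLoopOffset hlam hσ
  refine ⟨fun t => c + γ t, cone c γ, _, _, hγlip.const_add c,
    by simp [γ, kLoopOffset_zero, kLoopOffset_one hσ0], ?_, ?_,
    lipschitzOnWith_cone hγlip kLoopOffset_zero, ?_, fun τ _ => cone_apply_zero c γ τ,
    fun τ _ τ' _ => by simp [cone_apply_one],
    fun t _ => by simp [cone, γ, kLoopOffset_zero, kLoopOffset_one hσ0],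
    ae_cone_isotropic β hγ fun τ => bracket_consZero_consZero hβ _ _, ?_⟩
  · simp [γ, kLoopOffset_zero, c, abs_of_pos hlam]; linarith
  · filter_upwards [hA] with t ht
    refine ⟨ht.differentiableAt, ?_, ?_⟩
    · rw [ht.deriv]
      exact (bracket_single_add_consZero hβ lam _ _).trans (smul_inv_smul₀ hlam.ne' _)
    · simp only [ht.deriv, LinearIsometry.norm_map, norm_smul, norm_inv,
        Real.norm_of_nonneg hlam.le]
      gcongr
      exact inv_le_of_inv_le₀ (by positivity) (by simp; linarith)
  · rw [NNReal.coe_mul, Real.coe_toNNReal _ (by positivity)]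
    push_cast
    linarith
  · rw [hlen]
    refine (setIntegral_wedgeNorm_cone_le hγ
      ((consZero s).toContinuousLinearMap.integrable_comp (hσI.smul lam⁻¹))
      fun τ hτ => norm_kLoopOffset_le hσI (Ioo_subset_Icc_self hτ)).trans ?_
    nlinarith [sq_nonneg L]

/-- the bracket form of the 2-step algebra `𝔨_s` (generators
`X₁, …, X_{s+1}`, relations `[X₁, X_{k+1}] = Z_k`), namely
`β(u,v)_k = u₁v_{k+1} − u_{k+1}v₁`, is surjective on isotropic loops. -/
theorem stmt11 (s : ℕ) (hs : 1 ≤ s)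
    (β : Euc (s + 1) →L[ℝ] Euc (s + 1) →L[ℝ] Euc s)
    (hβ : ∀ u v : Euc (s + 1), ∀ k : Fin s,
      β u v k = u 0 * v k.succ - u k.succ * v 0) :
    ∃ C : ℝ, SurjOnIsotropicLoops β C :=
  stmt11_general s β hβ
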